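/- For every nonzero α ∈ ℂ, the algebras 𝔠₂₇(α) and 𝔠₂₇(1/α) are isomorphic, where 𝔠₂₇(α) is the commutative algebra on ℂ⁵ with basis e₁,…,e₅ and nonzero basis products e₁e₁ = α e₅, e₁e₂ = e₃, e₂e₂ = e₅, e₁e₃ = e₄, e₂e₃ = e₄, e₃e₃ = e₅. -/

import Mathlib

/-- Structure constants of the algebra 𝔠₂₇(α) on ℂ⁵ (basis `e₁, …, e₅` indexed by
`Fin 5`). Nonzero products: e₁e₁ = α e₅, e₁e₂ = e₃, e₂e₂ = e₅, e₁e₃ = e₄,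
e₂e₃ = e₄, e₃e₃ = e₅ (extended symmetrically). -/
noncomputable def tbl27 (α : ℂ) : Fin 5 → Fin 5 → Fin 5 → ℂ :=
  ![![![0,0,0,0,α], ![0,0,1,0,0], ![0,0,0,1,0], 0, 0],
    ![![0,0,1,0,0], ![0,0,0,0,1], ![0,0,0,1,0], 0, 0],
    ![![0,0,0,1,0], ![0,0,0,1,0], ![0,0,0,0,1], 0, 0],
    0,
    0]

/-- The bilinear multiplication of the algebra 𝔠₂₇(α) on ℂ⁵. -/
noncomputable def mul27 (α : ℂ) (x y : Fin 5 → ℂ) : Fin 5 → ℂ :=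
  fun k => ∑ i, ∑ j, x i * y j * tbl27 α i j k

/-!
Swap the first two coordinates and multiply the `i`-th by `bᵈ` with weights `d = 1, 1, 2, 3, 4`.
The weights add up along `e₁e₂ = e₃`, `e₁e₃ = e₂e₃ = e₄` and `e₃e₃ = e₅`, so only the two squares
`e₁e₁`, `e₂e₂` feeding `e₅` need care: the map is a homomorphism 𝔠₂₇(α) → 𝔠₂₇(b²) as soon as
`α b² = 1`, and over ℂ such a `b` exists for every `α ≠ 0`.
-/

lemma mul27_eq (α : ℂ) (x y : Fin 5 → ℂ) : mul27 α x y =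
    ![0, 0, x 0 * y 1 + x 1 * y 0, x 0 * y 2 + x 2 * y 0 + x 1 * y 2 + x 2 * y 1,
      α * (x 0 * y 0) + x 1 * y 1 + x 2 * y 2] := by
  funext k
  fin_cases k <;> simp [mul27, tbl27, Fin.sum_univ_five] <;> ring

def swapScale (b : ℂ) : (Fin 5 → ℂ) →ₗ[ℂ] (Fin 5 → ℂ) where
  toFun x := ![b * x 1, b * x 0, b ^ 2 * x 2, b ^ 3 * x 3, b ^ 4 * x 4]
  map_add' x y := by funext k; fin_cases k <;> simp <;> ring
  map_smul' c x := by funext k; fin_cases k <;> simp <;> ring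

lemma swapScale_comp_swapScale {b c : ℂ} (h : b * c = 1) :
    swapScale b ∘ₗ swapScale c = LinearMap.id := by
  refine LinearMap.ext fun x => funext fun k => ?_
  fin_cases k <;> simp [swapScale, ← mul_assoc, ← mul_pow, h]

noncomputable def swapScaleEquiv (b : ℂ) (hb : b ≠ 0) : (Fin 5 → ℂ) ≃ₗ[ℂ] (Fin 5 → ℂ) :=
  LinearEquiv.ofLinearMap (swapScale b) (swapScale b⁻¹)
    (swapScale_comp_swapScale (mul_inv_cancel₀ hb))
    (swapScale_comp_swapScale (inv_mul_cancel₀ hb))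

lemma swapScale_mul27 {α b : ℂ} (h : α * b ^ 2 = 1) (x y : Fin 5 → ℂ) :
    swapScale b (mul27 α x y) = mul27 (b ^ 2) (swapScale b x) (swapScale b y) := by
  rw [mul27_eq, mul27_eq]
  funext k
  fin_cases k
  · simp [swapScale]
  · simp [swapScale]
  · simp [swapScale]; ring
  · simp [swapScale]; ring
  · simp [swapScale]; linear_combination (b ^ 2 * x 0 * y 0) * h

theorem c27_iso (α : ℂ) (hα : α ≠ 0) :
    ∃ φ : (Fin 5 → ℂ) ≃ₗ[ℂ] (Fin 5 → ℂ),
      ∀ x y : Fin 5 → ℂ, φ (mul27 α x y) = mul27 (1 / α) (φ x) (φ y) := by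
  obtain ⟨b, hb⟩ := IsAlgClosed.exists_pow_nat_eq (1 / α) two_pos
  have hαb : α * b ^ 2 = 1 := by rw [hb, mul_one_div_cancel hα]
  have hb0 : b ≠ 0 := by rintro rfl; simp at hαb
  refine ⟨swapScaleEquiv b hb0, fun x y => ?_⟩
  rw [← hb]
  exact swapScale_mul27 hαb x y
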